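/- Let H be a complex Hilbert space, k ∈ ℕ and l ∈ ℕ. Let V^{⊗k}_l denote the set of unit vectors of H^{⊗k} with Schmidt rank ≤ l, and V^{∧k}_l the set of unit vectors of H^{∧k} with Slater rank ≤ l; let K^{⊗k}_l and K^{∧k}_l be the norm-closed convex hulls of {ω_{ξ,η} : ξ, η ∈ V^{⊗k}_l} and {ω_{ξ,η} : ξ, η ∈ V^{∧k}_l} respectively. Then: (i) every normal state φ on B(H^{⊗k}) satisfies q_{K^{⊗k}_l}(φ) ≥ 1, with equality if and only if the Schmidt number of φ is ≤ l; (ii) every normal state φ₋ on B(H^{∧k}) satisfies q_{K^{∧k}_l}(φ₋) ≥ 1, with equality if and only if the Slater number of φ₋ is ≤ l. -/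

import Mathlib

noncomputable section

open scoped InnerProductSpace ENNReal Pointwise

/-- The vector functional `ω_{ξ,η}` on `B(H)` given by `x ↦ ⟨xξ, η⟩`
(linear in `x`; in Mathlib's convention this is `⟪η, x ξ⟫_ℂ`). -/
def omegaFunctional {H : Type*} [NormedAddCommGroup H] [InnerProductSpace ℂ H]
    (ξ η : H) : (H →L[ℂ] H) →L[ℂ] ℂ :=
  (innerSL ℂ η).comp (ContinuousLinearMap.apply ℂ H ξ)

/-- A continuous linear functional on `B(H)` is *normal* if it lies in the norm closure of the
linear span of the vector functionals (this is the predual `B(H)_*`, i.e. the trace-class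
induced functionals). -/
def IsNormalFunctional {H : Type*} [NormedAddCommGroup H] [InnerProductSpace ℂ H]
    (ψ : (H →L[ℂ] H) →L[ℂ] ℂ) : Prop :=
  ψ ∈ closure (Submodule.span ℂ {φ : (H →L[ℂ] H) →L[ℂ] ℂ | ∃ ξ η : H, φ = omegaFunctional ξ η} :
    Set ((H →L[ℂ] H) →L[ℂ] ℂ))

/-- A *normal state* on `B(H)`: a positive normal functional of norm one. -/
def IsNormalState {H : Type*} [NormedAddCommGroup H] [InnerProductSpace ℂ H] [CompleteSpace H]
    (φ : (H →L[ℂ] H) →L[ℂ] ℂ) : Prop :=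
  IsNormalFunctional φ ∧ ‖φ‖ = 1 ∧
    ∀ x : H →L[ℂ] H, x.IsPositive → 0 ≤ (φ x).re ∧ (φ x).im = 0

/-- `‖x‖_K := sup {|ψ(x)| : ψ ∈ K}`. -/
def normK {H : Type*} [NormedAddCommGroup H] [InnerProductSpace ℂ H]
    (K : Set ((H →L[ℂ] H) →L[ℂ] ℂ)) (x : H →L[ℂ] H) : ℝ :=
  sSup ((fun ψ : (H →L[ℂ] H) →L[ℂ] ℂ => ‖ψ x‖) '' K)

/-- The Minkowski functional `q_K(ψ) := inf {α ≥ 0 : ψ ∈ αK}`, with value `∞` if no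
such `α` exists. -/
def qK {H : Type*} [NormedAddCommGroup H] [InnerProductSpace ℂ H]
    (K : Set ((H →L[ℂ] H) →L[ℂ] ℂ)) (ψ : (H →L[ℂ] H) →L[ℂ] ℂ) : ℝ≥0∞ :=
  sInf {c : ℝ≥0∞ | ∃ r : ℝ, 0 ≤ r ∧ c = ENNReal.ofReal r ∧ ψ ∈ r • K}


/-- An abstract presentation of the `k`-fold Hilbert space tensor power `H^{⊗k}` of `H`,
realized on a Hilbert space `T`: a continuous multilinear map `tprod` (the elementary tensors
`η₁ ⊗ ... ⊗ η_k`) whose inner products multiply, whose range has dense linear span, together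
with the permutation unitaries `U_π` permuting the tensor factors. -/
structure HilbertTensorPower (k : ℕ) (H T : Type*) [NormedAddCommGroup H]
    [InnerProductSpace ℂ H] [NormedAddCommGroup T] [InnerProductSpace ℂ T] where
  tprod : ContinuousMultilinearMap ℂ (fun _ : Fin k => H) T
  inner_tprod : ∀ ξ η : Fin k → H, ⟪tprod ξ, tprod η⟫_ℂ = ∏ i, ⟪ξ i, η i⟫_ℂ
  span_dense : (Submodule.span ℂ (Set.range ⇑tprod)).topologicalClosure = ⊤
  U : Equiv.Perm (Fin k) → (T →L[ℂ] T)
  U_isometry : ∀ π, Isometry ⇑(U π)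
  U_surjective : ∀ π, Function.Surjective ⇑(U π)
  U_tprod : ∀ (π : Equiv.Perm (Fin k)) (ξ : Fin k → H),
    U π (tprod ξ) = tprod fun i => ξ (π i)

namespace HilbertTensorPower

variable {k : ℕ} {H T : Type*} [NormedAddCommGroup H] [InnerProductSpace ℂ H]
  [NormedAddCommGroup T] [InnerProductSpace ℂ T]

/-- The symmetrization projection `P₊ = (1/k!) Σ_π U_π`. -/
def Pplus (P : HilbertTensorPower k H T) : T →L[ℂ] T :=
  ((k.factorial : ℂ))⁻¹ • ∑ π : Equiv.Perm (Fin k), P.U π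

/-- The antisymmetrization projection `P₋ = (1/k!) Σ_π sign(π) U_π`. -/
def Pminus (P : HilbertTensorPower k H T) : T →L[ℂ] T :=
  ((k.factorial : ℂ))⁻¹ •
    ∑ π : Equiv.Perm (Fin k), (((Equiv.Perm.sign π : ℤ) : ℂ)) • P.U π

/-- The wedge product `η₁ ∧ ... ∧ η_k := √(k!) · P₋(η₁ ⊗ ... ⊗ η_k)`. -/
def wedge (P : HilbertTensorPower k H T) (η : Fin k → H) : T :=
  (Real.sqrt k.factorial : ℂ) • P.Pminus (P.tprod η)

/-- The set `V^{⊗k}` of unit product vectors. -/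
def prodVecs (P : HilbertTensorPower k H T) : Set T :=
  {ζ : T | ∃ η : Fin k → H, (∀ i, ‖η i‖ = 1) ∧ ζ = P.tprod η}

/-- The set `V^{∨k}` of symmetric unit product vectors `η ⊗ ... ⊗ η`. -/
def symVecs (P : HilbertTensorPower k H T) : Set T :=
  {ζ : T | ∃ η : H, ‖η‖ = 1 ∧ ζ = P.tprod fun _ => η}

/-- The set `V^{∧k}` of unit wedge (Slater) vectors. -/
def wedgeVecs (P : HilbertTensorPower k H T) : Set T :=
  {ζ : T | ∃ η : Fin k → H, ζ = P.wedge η ∧ ‖ζ‖ = 1}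

end HilbertTensorPower

/-! A normal state `φ` satisfies `φ 1 = ‖φ‖ = 1`, and the closed convex hull `K` of the
`ω_{ξ,η}` (`ξ, η` unit vectors of `V`) lies in the unit ball; hence `φ ∈ r • K` forces `r ≥ 1`, and
`q_K(φ) = 1` exactly when `φ ∈ K`. If `ψ = ∑ wᵢ ω_{ξᵢ,ηᵢ}` is a convex combination, replacing each
`ηᵢ` by `ξᵢ` moves `ψ` by at most `∑ wᵢ ‖ηᵢ - ξᵢ‖`, whose square is at most
`∑ wᵢ ‖ηᵢ - ξᵢ‖² = 2 (1 - Re ψ(1))`. Since `φ(1) = 1`, a state in `K` is therefore a limit of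
convex combinations of the vector states `ω_ξ`, `ξ ∈ V`. -/

open ComplexOrder ComplexStarModule Metric Set

namespace PositiveLinearMap

variable {A : Type*} [CStarAlgebra A] [PartialOrder A] [StarOrderedRing A]

/- Rotating `a` by a phase makes `f a` real; its value is then that of `f` on the real part of
the rotated element, which lies below `‖a‖ • 1`. -/
lemma norm_apply_le_norm_apply_one (f : A →ₚ[ℂ] ℂ) (a : A) : ‖f a‖ ≤ ‖f 1‖ * ‖a‖ := by
  obtain ⟨u, hu, hfu⟩ : ∃ u : ℂ, ‖u‖ = 1 ∧ f (u • a) = ‖f a‖ := by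
    refine ⟨Complex.exp (↑(-(f a).arg) * Complex.I), Complex.norm_exp_ofReal_mul_I _, ?_⟩
    conv_lhs => rw [map_smul, smul_eq_mul, ← Complex.norm_mul_exp_arg_mul_I (f a), mul_left_comm,
      ← Complex.exp_add]
    simp
  have h1 : f 1 = ‖f 1‖ := Complex.eq_coe_norm_of_nonneg (f.map_nonneg zero_le_one)
  have hle := f.apply_le_of_isSelfAdjoint _ (ℜ (u • a)).2
  rw [Algebra.algebraMap_eq_smul_one, map_smul_of_tower, map_realPart, Complex.coe_realPart, hfu,
    Complex.ofReal_re, h1, ← Complex.coe_smul, smul_eq_mul, ← Complex.ofReal_mul,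
    Complex.real_le_real] at hle
  calc ‖f a‖ ≤ ‖ℜ (u • a)‖ * ‖f 1‖ := hle
    _ ≤ ‖a‖ * ‖f 1‖ := by
        gcongr
        exact (realPart.norm_le _).trans (by rw [norm_smul, hu, one_mul])
    _ = ‖f 1‖ * ‖a‖ := mul_comm _ _

end PositiveLinearMap

lemma mem_closure_of_forall_exists_sq_norm_sub_le {X : Type*} [SeminormedAddCommGroup X]
    {T C : Set X} {g : X → ℝ} (hgc : Continuous g) (hT : ∀ t ∈ T, ∃ c ∈ C, ‖t - c‖ ^ 2 ≤ g t)
    {x : X} (hx : x ∈ closure T) (hgx : g x ≤ 0) : x ∈ closure C := by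
  have hclosed : IsClosed {x | infDist x C ^ 2 ≤ g x} :=
    isClosed_le ((continuous_infDist_pt C).pow 2) hgc
  have hx' : infDist x C ^ 2 ≤ g x := by
    refine closure_minimal (fun t ht => ?_) hclosed hx
    obtain ⟨c, hc, h⟩ := hT t ht
    calc infDist t C ^ 2 ≤ dist t c ^ 2 :=
          pow_le_pow_left₀ infDist_nonneg (infDist_le_dist_of_mem hc) 2
      _ = ‖t - c‖ ^ 2 := by rw [dist_eq_norm]
      _ ≤ g t := h
  obtain ⟨t, ht⟩ := closure_nonempty_iff.1 ⟨x, hx⟩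
  obtain ⟨c, hc, -⟩ := hT t ht
  exact (mem_closure_iff_infDist_zero ⟨c, hc⟩).2
    (pow_eq_zero_iff two_ne_zero |>.1 (le_antisymm (hx'.trans hgx) (by positivity)))

lemma one_le_and_exists_dist_le_of_mem_smul {X : Type*} [NormedAddCommGroup X]
    [NormedSpace ℝ X] {K : Set X} (hK : K ⊆ closedBall 0 1) {x : X} (hx : ‖x‖ = 1) {r : ℝ}
    (hr : 0 ≤ r) (h : x ∈ r • K) : 1 ≤ r ∧ ∃ y ∈ K, dist x y ≤ r - 1 := by
  obtain ⟨y, hy, rfl⟩ := h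
  have hy1 : ‖y‖ ≤ 1 := mem_closedBall_zero_iff.1 (hK hy)
  rw [norm_smul_of_nonneg hr] at hx
  have hr1 : 1 ≤ r := by nlinarith [norm_nonneg y]
  refine ⟨hr1, y, hy, ?_⟩
  calc dist (r • y) y = ‖(r - 1) • y‖ := by rw [dist_eq_norm, sub_smul, one_smul]
    _ = (r - 1) * ‖y‖ := norm_smul_of_nonneg (sub_nonneg.2 hr1) y
    _ ≤ r - 1 := mul_le_of_le_one_right (sub_nonneg.2 hr1) hy1

lemma IsNormalState.apply_one {E : Type*} [NormedAddCommGroup E] [InnerProductSpace ℂ E]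
    [CompleteSpace E] {φ : (E →L[ℂ] E) →L[ℂ] ℂ} (hφ : IsNormalState φ) : φ 1 = 1 := by
  let f : (E →L[ℂ] E) →ₚ[ℂ] ℂ := .mk₀ φ.toLinearMap fun x hx => by
    obtain ⟨hre, him⟩ := hφ.2.2 x ((ContinuousLinearMap.nonneg_iff_isPositive x).1 hx)
    exact Complex.nonneg_iff.2 ⟨hre, him.symm⟩
  have h0 : 0 ≤ φ 1 := f.map_nonneg zero_le_one
  have hle : ‖φ‖ ≤ ‖φ 1‖ := φ.opNorm_le_bound (norm_nonneg _) f.norm_apply_le_norm_apply_one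
  have hge : ‖φ 1‖ ≤ ‖φ‖ :=
    (φ.le_opNorm 1).trans (mul_le_of_le_one_right (norm_nonneg _) ContinuousLinearMap.norm_id_le)
  rw [Complex.eq_coe_norm_of_nonneg h0, le_antisymm hge hle, hφ.2.1, Complex.ofReal_one]

section VectorFunctionals

variable {E : Type*} [NormedAddCommGroup E] [InnerProductSpace ℂ E]

@[simp]
lemma omegaFunctional_apply (ξ η : E) (x : E →L[ℂ] E) : omegaFunctional ξ η x = ⟪η, x ξ⟫_ℂ :=
  rfl

lemma norm_omegaFunctional_le (ξ η : E) : ‖omegaFunctional ξ η‖ ≤ ‖η‖ * ‖ξ‖ := by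
  refine ContinuousLinearMap.opNorm_le_bound _ (by positivity) fun x => ?_
  calc ‖⟪η, x ξ⟫_ℂ‖ ≤ ‖η‖ * ‖x ξ‖ := norm_inner_le_norm _ _
    _ ≤ ‖η‖ * (‖x‖ * ‖ξ‖) := by gcongr; exact x.le_opNorm ξ
    _ = ‖η‖ * ‖ξ‖ * ‖x‖ := by ring

lemma omegaFunctional_sub_right (ξ η ζ : E) :
    omegaFunctional ξ η - omegaFunctional ξ ζ = omegaFunctional ξ (η - ζ) := by
  ext x
  simp

def vectorFunctionals (V : Set E) : Set ((E →L[ℂ] E) →L[ℂ] ℂ) :=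
  {ψ | ∃ ξ ∈ V, ∃ η ∈ V, ψ = omegaFunctional ξ η}

def vectorStates (V : Set E) : Set ((E →L[ℂ] E) →L[ℂ] ℂ) :=
  {ψ | ∃ ξ ∈ V, ψ = omegaFunctional ξ ξ}

lemma vectorStates_subset_vectorFunctionals (V : Set E) :
    vectorStates V ⊆ vectorFunctionals V := by
  rintro _ ⟨ξ, hξ, rfl⟩
  exact ⟨ξ, hξ, ξ, hξ, rfl⟩

lemma vectorFunctionals_subset_closedBall {V : Set E} (hV : ∀ ξ ∈ V, ‖ξ‖ = 1) :
    vectorFunctionals V ⊆ closedBall 0 1 := by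
  rintro _ ⟨ξ, hξ, η, hη, rfl⟩
  have h : ‖omegaFunctional ξ η‖ ≤ 1 := by
    simpa [hV ξ hξ, hV η hη] using norm_omegaFunctional_le ξ η
  exact (mem_closedBall_zero_iff (E := (E →L[ℂ] E) →L[ℂ] ℂ)).2 h

end VectorFunctionals

section Defect

variable {E : Type*} [NormedAddCommGroup E] [InnerProductSpace ℂ E]

/- Instance search misses this: the `ℝ`-action on this type that it finds is not reducibly
defeq to the one underlying `ContinuousLinearMap.toNormedSpace`. -/
instance : NormSMulClass ℝ ((E →L[ℂ] E) →L[ℂ] ℂ) :=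
  @NormedSpace.toNormSMulClass _ _ _ _ ContinuousLinearMap.toNormedSpace

lemma convex_setOf_exists_sq_norm_sub_le {C : Set ((E →L[ℂ] E) →L[ℂ] ℂ)} (hC : Convex ℝ C)
    {g : ((E →L[ℂ] E) →L[ℂ] ℂ) → ℝ} (hg : ConcaveOn ℝ univ g) :
    Convex ℝ {ψ | ∃ ψ' ∈ C, ‖ψ - ψ'‖ ^ 2 ≤ g ψ} := by
  rintro x₁ ⟨y₁, hy₁, h₁⟩ x₂ ⟨y₂, hy₂, h₂⟩ a b ha hb hab
  refine ⟨a • y₁ + b • y₂, hC hy₁ hy₂ ha hb hab, ?_⟩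
  have hnorm : ‖a • x₁ + b • x₂ - (a • y₁ + b • y₂)‖ ≤ a * ‖x₁ - y₁‖ + b * ‖x₂ - y₂‖ := by
    calc ‖a • x₁ + b • x₂ - (a • y₁ + b • y₂)‖ = ‖a • (x₁ - y₁) + b • (x₂ - y₂)‖ := by
          congr 1; module
      _ ≤ a * ‖x₁ - y₁‖ + b * ‖x₂ - y₂‖ := by
          refine (norm_add_le (a • (x₁ - y₁)) (b • (x₂ - y₂))).trans_eq ?_
          exact congrArg₂ (· + ·) (norm_smul_of_nonneg ha (x₁ - y₁))
            (norm_smul_of_nonneg hb (x₂ - y₂))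
  calc ‖a • x₁ + b • x₂ - (a • y₁ + b • y₂)‖ ^ 2 ≤ (a * ‖x₁ - y₁‖ + b * ‖x₂ - y₂‖) ^ 2 := by
        gcongr
    _ ≤ a * ‖x₁ - y₁‖ ^ 2 + b * ‖x₂ - y₂‖ ^ 2 := by
        nlinarith [mul_nonneg ha hb, sq_nonneg (‖x₁ - y₁‖ - ‖x₂ - y₂‖)]
    _ ≤ a * g x₁ + b * g x₂ := by gcongr
    _ ≤ g (a • x₁ + b • x₂) := hg.2 (mem_univ _) (mem_univ _) ha hb hab

lemma norm_omegaFunctional_sub_sq_le {ξ η : E} (hξ : ‖ξ‖ = 1) (hη : ‖η‖ = 1) :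
    ‖omegaFunctional ξ η - omegaFunctional ξ ξ‖ ^ 2 ≤ 2 * (1 - (omegaFunctional ξ η 1).re) := by
  have hle : ‖omegaFunctional ξ η - omegaFunctional ξ ξ‖ ≤ ‖η - ξ‖ := by
    simpa [omegaFunctional_sub_right, hξ] using norm_omegaFunctional_le ξ (η - ξ)
  calc ‖omegaFunctional ξ η - omegaFunctional ξ ξ‖ ^ 2 ≤ ‖η - ξ‖ ^ 2 := by gcongr
    _ = 2 * (1 - (omegaFunctional ξ η 1).re) := by
        simp only [@norm_sub_sq ℂ, hξ, hη, omegaFunctional_apply, one_apply_eq_self,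
          RCLike.re_to_complex]
        ring

lemma exists_norm_sub_sq_le_of_mem_convexHull {V : Set E} (hV : ∀ ξ ∈ V, ‖ξ‖ = 1) :
    ∀ ψ ∈ convexHull ℝ (vectorFunctionals V), ∃ ψ' ∈ convexHull ℝ (vectorStates V),
      ‖ψ - ψ'‖ ^ 2 ≤ 2 * (1 - (ψ 1).re) := by
  have hg : ConcaveOn ℝ univ fun ψ : (E →L[ℂ] E) →L[ℂ] ℂ => 2 * (1 - (ψ 1).re) := by
    refine ⟨convex_univ, fun x _ y _ a b _ _ hab => ?_⟩
    simp
    linear_combination 2 * hab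
  refine convexHull_min ?_ (convex_setOf_exists_sq_norm_sub_le (convex_convexHull ℝ _) hg)
  rintro _ ⟨ξ, hξ, η, hη, rfl⟩
  exact ⟨omegaFunctional ξ ξ, subset_convexHull ℝ _ ⟨ξ, hξ, rfl⟩,
    norm_omegaFunctional_sub_sq_le (hV ξ hξ) (hV η hη)⟩

lemma mem_closure_convexHull_vectorStates {V : Set E} (hV : ∀ ξ ∈ V, ‖ξ‖ = 1)
    {φ : (E →L[ℂ] E) →L[ℂ] ℂ} (hφ1 : φ 1 = 1)
    (hφ : φ ∈ closure (convexHull ℝ (vectorFunctionals V))) :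
    φ ∈ closure (convexHull ℝ (vectorStates V)) := by
  have hg : Continuous fun ψ : (E →L[ℂ] E) →L[ℂ] ℂ => 2 * (1 - (ψ 1).re) := by fun_prop
  exact mem_closure_of_forall_exists_sq_norm_sub_le (X := (E →L[ℂ] E) →L[ℂ] ℂ)
    (T := convexHull ℝ (vectorFunctionals V)) hg (exists_norm_sub_sq_le_of_mem_convexHull hV) hφ
    (by simp [hφ1])

end Defect

section MinkowskiFunctional

variable {E : Type*} [NormedAddCommGroup E] [InnerProductSpace ℂ E]
  {K : Set ((E →L[ℂ] E) →L[ℂ] ℂ)} {φ : (E →L[ℂ] E) →L[ℂ] ℂ}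

lemma one_le_qK (hK : K ⊆ closedBall 0 1) (hφ : ‖φ‖ = 1) : 1 ≤ qK K φ := by
  refine le_sInf ?_
  rintro _ ⟨r, hr, rfl, hmem⟩
  have h := one_le_and_exists_dist_le_of_mem_smul (X := (E →L[ℂ] E) →L[ℂ] ℂ) hK hφ hr hmem
  exact ENNReal.one_le_ofReal.2 h.1

lemma qK_eq_one_iff (hKc : IsClosed K) (hK : K ⊆ closedBall 0 1) (hφ : ‖φ‖ = 1) :
    qK K φ = 1 ↔ φ ∈ K := by
  refine ⟨fun hq => hKc.closure_subset ?_, fun h =>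
    le_antisymm (sInf_le ⟨1, zero_le_one, ENNReal.ofReal_one.symm, φ, h, one_smul ℝ φ⟩)
      (one_le_qK hK hφ)⟩
  refine (Metric.mem_closure_iff (α := (E →L[ℂ] E) →L[ℂ] ℂ)).2 fun δ hδ => ?_
  have hlt : qK K φ < ENNReal.ofReal (1 + δ) := by
    rw [hq, ← ENNReal.ofReal_one]
    exact (ENNReal.ofReal_lt_ofReal_iff (by linarith)).2 (by linarith)
  obtain ⟨_, ⟨r, hr, rfl, hmem⟩, hrδ⟩ := sInf_lt_iff.1 hlt
  have h := one_le_and_exists_dist_le_of_mem_smul (X := (E →L[ℂ] E) →L[ℂ] ℂ) hK hφ hr hmem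
  obtain ⟨_, ψ, hψ, hdist⟩ := h
  have hrδ' : r < 1 + δ := (ENNReal.ofReal_lt_ofReal_iff (by linarith)).1 hrδ
  exact ⟨ψ, hψ, by linarith⟩

end MinkowskiFunctional

theorem IsNormalState.one_le_qK_and_qK_eq_one_iff {E : Type*} [NormedAddCommGroup E]
    [InnerProductSpace ℂ E] [CompleteSpace E] {V : Set E} (hV : ∀ ξ ∈ V, ‖ξ‖ = 1)
    {φ : (E →L[ℂ] E) →L[ℂ] ℂ} (hφ : IsNormalState φ) :
    1 ≤ qK (closure (convexHull ℝ (vectorFunctionals V))) φ ∧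
      (qK (closure (convexHull ℝ (vectorFunctionals V))) φ = 1 ↔
        φ ∈ closure (convexHull ℝ (vectorStates V))) := by
  have hK : closure (convexHull ℝ (vectorFunctionals V)) ⊆ closedBall 0 1 :=
    closure_minimal (convexHull_min (vectorFunctionals_subset_closedBall hV)
      (convex_closedBall 0 1)) isClosed_closedBall
  refine ⟨one_le_qK hK hφ.2.1, (qK_eq_one_iff isClosed_closure hK hφ.2.1).trans
    ⟨mem_closure_convexHull_vectorStates hV hφ.apply_one,
      fun h => closure_mono (convexHull_mono (vectorStates_subset_vectorFunctionals V)) h⟩⟩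

theorem stmt17_general {H T : Type*} [NormedAddCommGroup H] [InnerProductSpace ℂ H]
    [NormedAddCommGroup T] [InnerProductSpace ℂ T] [CompleteSpace T]
    (k l : ℕ) (P : HilbertTensorPower k H T)
    (Vtl Vwl : Set T)
    (hVtl : Vtl = {ξ : T | ‖ξ‖ = 1 ∧ ∃ (c : Fin l → ℂ) (η : Fin l → Fin k → H),
      (∀ i j, ‖η i j‖ = 1) ∧ ξ = ∑ i, c i • P.tprod (η i)})
    (hVwl : Vwl = {ξ : T | ‖ξ‖ = 1 ∧ ∃ (c : Fin l → ℂ) (η : Fin l → Fin k → H),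
      (∀ i, ‖P.wedge (η i)‖ = 1) ∧ ξ = ∑ i, c i • P.wedge (η i)})
    (Ktl Kwl : Set ((T →L[ℂ] T) →L[ℂ] ℂ))
    (hKtl : Ktl = closure (convexHull ℝ
      {φ : (T →L[ℂ] T) →L[ℂ] ℂ | ∃ ξ ∈ Vtl, ∃ η ∈ Vtl, φ = omegaFunctional ξ η}))
    (hKwl : Kwl = closure (convexHull ℝ
      {φ : (T →L[ℂ] T) →L[ℂ] ℂ | ∃ ξ ∈ Vwl, ∃ η ∈ Vwl, φ = omegaFunctional ξ η})) :
    (∀ φ : (T →L[ℂ] T) →L[ℂ] ℂ, IsNormalState φ →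
      1 ≤ qK Ktl φ ∧
      (qK Ktl φ = 1 ↔ φ ∈ closure (convexHull ℝ
        {ψ : (T →L[ℂ] T) →L[ℂ] ℂ | ∃ ξ ∈ Vtl, ψ = omegaFunctional ξ ξ}))) ∧
    (∀ φ : (T →L[ℂ] T) →L[ℂ] ℂ, IsNormalState φ →
      (∀ x : T →L[ℂ] T, φ x = φ (P.Pminus ∘L x ∘L P.Pminus)) →
      1 ≤ qK Kwl φ ∧
      (qK Kwl φ = 1 ↔ φ ∈ closure (convexHull ℝ
        {ψ : (T →L[ℂ] T) →L[ℂ] ℂ | ∃ ξ ∈ Vwl, ψ = omegaFunctional ξ ξ}))) := by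
  have hVtl1 : ∀ ξ ∈ Vtl, ‖ξ‖ = 1 := by rw [hVtl]; exact fun ξ hξ => hξ.1
  have hVwl1 : ∀ ξ ∈ Vwl, ‖ξ‖ = 1 := by rw [hVwl]; exact fun ξ hξ => hξ.1
  subst hKtl hKwl
  exact ⟨fun φ hφ => hφ.one_le_qK_and_qK_eq_one_iff hVtl1,
    fun φ hφ _ => hφ.one_le_qK_and_qK_eq_one_iff hVwl1⟩

/-- With `V^{⊗k}_l` the unit vectors of Schmidt rank `≤ l`, `V^{∧k}_l` the
unit vectors of Slater rank `≤ l`, and `K^{⊗k}_l`, `K^{∧k}_l` the norm-closed convex hulls of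
the corresponding vector functionals: (i) every normal state `φ` on `B(H^{⊗k})` satisfies
`q_{K^{⊗k}_l}(φ) ≥ 1`, with equality iff the Schmidt number of `φ` is `≤ l`; (ii) every normal
state `φ₋` on `B(H^{∧k})` satisfies `q_{K^{∧k}_l}(φ₋) ≥ 1`, with equality iff the Slater
number of `φ₋` is `≤ l`. -/
theorem stmt17 {H T : Type*} [NormedAddCommGroup H] [InnerProductSpace ℂ H] [CompleteSpace H]
    [NormedAddCommGroup T] [InnerProductSpace ℂ T] [CompleteSpace T]
    (k l : ℕ) (P : HilbertTensorPower k H T)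
    (Vtl Vwl : Set T)
    (hVtl : Vtl = {ξ : T | ‖ξ‖ = 1 ∧ ∃ (c : Fin l → ℂ) (η : Fin l → Fin k → H),
      (∀ i j, ‖η i j‖ = 1) ∧ ξ = ∑ i, c i • P.tprod (η i)})
    (hVwl : Vwl = {ξ : T | ‖ξ‖ = 1 ∧ ∃ (c : Fin l → ℂ) (η : Fin l → Fin k → H),
      (∀ i, ‖P.wedge (η i)‖ = 1) ∧ ξ = ∑ i, c i • P.wedge (η i)})
    (Ktl Kwl : Set ((T →L[ℂ] T) →L[ℂ] ℂ))
    (hKtl : Ktl = closure (convexHull ℝ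
      {φ : (T →L[ℂ] T) →L[ℂ] ℂ | ∃ ξ ∈ Vtl, ∃ η ∈ Vtl, φ = omegaFunctional ξ η}))
    (hKwl : Kwl = closure (convexHull ℝ
      {φ : (T →L[ℂ] T) →L[ℂ] ℂ | ∃ ξ ∈ Vwl, ∃ η ∈ Vwl, φ = omegaFunctional ξ η})) :
    (∀ φ : (T →L[ℂ] T) →L[ℂ] ℂ, IsNormalState φ →
      1 ≤ qK Ktl φ ∧
      (qK Ktl φ = 1 ↔ φ ∈ closure (convexHull ℝ
        {ψ : (T →L[ℂ] T) →L[ℂ] ℂ | ∃ ξ ∈ Vtl, ψ = omegaFunctional ξ ξ}))) ∧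
    (∀ φ : (T →L[ℂ] T) →L[ℂ] ℂ, IsNormalState φ →
      (∀ x : T →L[ℂ] T, φ x = φ (P.Pminus ∘L x ∘L P.Pminus)) →
      1 ≤ qK Kwl φ ∧
      (qK Kwl φ = 1 ↔ φ ∈ closure (convexHull ℝ
        {ψ : (T →L[ℂ] T) →L[ℂ] ℂ | ∃ ξ ∈ Vwl, ψ = omegaFunctional ξ ξ}))) :=
  stmt17_general k l P Vtl Vwl hVtl hVwl Ktl Kwl hKtl hKwl
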